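/- arXiv:2407.05261 — 2 statements merged into one kernel-verified Lean document; each statement's English description precedes it below -/
import Mathlib

section
/- For nonzero vectors y₁,…,yₙ ∈ ℝ^d, the function f(X) = log(Σᵢ yᵢᵀ X yᵢ) satisfies the geodesic midpoint convexity inequality on the positive definite matrices: for all A, B ∈ ℙ_d, (Σᵢ yᵢᵀ (A♯B) yᵢ)² ≤ (Σᵢ yᵢᵀ A yᵢ)(Σᵢ yᵢᵀ B yᵢ), equivalently f(A♯B) ≤ ½ f(A) + ½ f(B). -/
open Matrix Set

/-- Real matrix power via the continuous functional calculus (spectral decomposition):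
for a Hermitian matrix, applies `fun λ => λ ^ t` to the eigenvalues. -/
noncomputable def mpow {d : ℕ} (A : Matrix (Fin d) (Fin d) ℝ) (t : ℝ) :
    Matrix (Fin d) (Fin d) ℝ :=
  cfc (fun x : ℝ => x ^ t) A

/-- The affine-invariant geodesic `A ♯ₜ B = A^{1/2} (A^{-1/2} B A^{-1/2})^t A^{1/2}`. -/
noncomputable def sharp {d : ℕ} (A B : Matrix (Fin d) (Fin d) ℝ) (t : ℝ) :
    Matrix (Fin d) (Fin d) ℝ :=
  mpow A (1/2) * mpow (mpow A (-(1/2)) * B * mpow A (-(1/2))) t * mpow A (1/2)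

/-!
Put `R = A^{1/2}`, `C = A^{-1/2} B A^{-1/2}` and `T = C^{1/2}`, so that `A = Rᵀ R`,
`B = (T R)ᵀ (T R)` and `A ♯ B = Rᵀ (T R)`. For `z = R y` the three quadratic forms are
`⟪z, z⟫`, `⟪T z, T z⟫` and `⟪z, T z⟫`, so Cauchy–Schwarz gives
`(yᵀ (A ♯ B) y)² ≤ (yᵀ A y)(yᵀ B y)` for each vector, and Cauchy–Schwarz for sums,
`(∑ rᵢ)² ≤ ∑ aᵢ ∑ bᵢ` when `rᵢ² ≤ aᵢ bᵢ`, adds these up. Taking logarithms needs the left-hand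
sum to be positive, which holds unless every `yᵢ` vanishes, and then all three sums are `0`.
-/

open scoped MatrixOrder

namespace Matrix

variable {n : Type*} [Fintype n]

lemma sq_dotProduct_le (u v : n → ℝ) : (u ⬝ᵥ v) ^ 2 ≤ (u ⬝ᵥ u) * (v ⬝ᵥ v) := by
  simpa only [dotProduct, sq] using Finset.sum_mul_sq_le_sq_mul_sq Finset.univ u v

lemma dotProduct_transpose_mul_mulVec {α : Type*} [CommSemiring α] (S M : Matrix n n α)
    (x y : n → α) : x ⬝ᵥ (Sᵀ * M) *ᵥ y = (S *ᵥ x) ⬝ᵥ M *ᵥ y := by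
  rw [← mulVec_mulVec, dotProduct_transpose_mulVec, dotProduct_comm]

lemma PosDef.mul_mul_of_isHermitian_of_isUnit {R : Type*} [Ring R] [PartialOrder R] [StarRing R]
    [DecidableEq n] {M S : Matrix n n R} (hM : M.PosDef) (hS : S.IsHermitian) (hSu : IsUnit S) :
    (S * M * S).PosDef := by
  simpa [star_eq_conjTranspose, hS.eq] using hSu.posDef_star_right_conjugate_iff.mpr hM

lemma sum_dotProduct_mulVec_pos {ι : Type*} [Fintype ι] {M : Matrix n n ℝ} (hM : M.PosDef)
    {y : ι → n → ℝ} (hy : ∃ i, y i ≠ 0) : 0 < ∑ i, y i ⬝ᵥ M *ᵥ y i := by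
  obtain ⟨j, hj⟩ := hy
  refine Finset.sum_pos' (fun i _ => ?_) ⟨j, Finset.mem_univ j, ?_⟩
  · simpa using hM.posSemidef.dotProduct_mulVec_nonneg (y i)
  · simpa using hM.dotProduct_mulVec_pos hj

variable {d : ℕ}

lemma PosDef.mpow {A : Matrix (Fin d) (Fin d) ℝ} (hA : A.PosDef) (t : ℝ) :
    (mpow A t).PosDef := by
  refine IsStrictlyPositive.posDef ((cfc_isStrictlyPositive_iff _ A ?_ hA.1).mpr fun x hx => ?_)
  · exact A.finite_spectrum.continuousOn _
  · exact Real.rpow_pos_of_pos (hA.isStrictlyPositive.spectrum_pos hx) t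

lemma mpow_mul_mpow {A : Matrix (Fin d) (Fin d) ℝ} (hA : A.PosDef) (s t : ℝ) :
    mpow A s * mpow A t = mpow A (s + t) := by
  rw [mpow, mpow, mpow, ← cfc_mul _ _ A (A.finite_spectrum.continuousOn _)
    (A.finite_spectrum.continuousOn _)]
  exact cfc_congr fun x hx => (Real.rpow_add (hA.isStrictlyPositive.spectrum_pos hx) s t).symm

lemma mpow_mul_mpow_neg {A : Matrix (Fin d) (Fin d) ℝ} (hA : A.PosDef) (t : ℝ) :
    mpow A t * mpow A (-t) = 1 := by
  rw [mpow_mul_mpow hA, add_neg_cancel, mpow]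
  simp only [Real.rpow_zero]
  exact cfc_const_one ℝ A hA.1

lemma mpow_half_mul_mpow_half {A : Matrix (Fin d) (Fin d) ℝ} (hA : A.PosDef) :
    mpow A (1/2) * mpow A (1/2) = A := by
  rw [mpow_mul_mpow hA, add_halves, mpow]
  simp only [Real.rpow_one]
  exact cfc_id' ℝ A hA.1

lemma PosDef.sharp {A B : Matrix (Fin d) (Fin d) ℝ} (hA : A.PosDef) (hB : B.PosDef) (t : ℝ) :
    (sharp A B t).PosDef := by
  have hR := hA.mpow (1/2)
  have hN := hA.mpow (-(1/2))
  exact ((hB.mul_mul_of_isHermitian_of_isUnit hN.1 hN.isUnit).mpow t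
    |>.mul_mul_of_isHermitian_of_isUnit hR.1 hR.isUnit)

theorem sq_dotProduct_sharp_half_mulVec_le {A B : Matrix (Fin d) (Fin d) ℝ} (hA : A.PosDef)
    (hB : B.PosDef) (x : Fin d → ℝ) :
    (x ⬝ᵥ sharp A B (1/2) *ᵥ x) ^ 2 ≤ (x ⬝ᵥ A *ᵥ x) * (x ⬝ᵥ B *ᵥ x) := by
  set R := mpow A (1/2)
  set N := mpow A (-(1/2))
  set T := mpow (N * B * N) (1/2)
  have hN := hA.mpow (-(1/2))
  have hC : (N * B * N).PosDef := hB.mul_mul_of_isHermitian_of_isUnit hN.1 hN.isUnit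
  have hRt : Rᵀ = R := (isHermitian_iff_isSymm.mp (hA.mpow _).1).eq
  have hTt : Tᵀ = T := (isHermitian_iff_isSymm.mp (hC.mpow _).1).eq
  have hA' : A = Rᵀ * R := by rw [hRt, mpow_half_mul_mpow_half hA]
  have hB' : B = (T * R)ᵀ * (T * R) := by
    have hNR : N * R = 1 := mul_eq_one_comm.mp (mpow_mul_mpow_neg hA _)
    calc B = (R * N) * B * (N * R) := by rw [mpow_mul_mpow_neg hA, hNR, one_mul, mul_one]
      _ = R * (T * T) * R := by rw [mpow_half_mul_mpow_half hC]; simp only [mul_assoc]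
      _ = (T * R)ᵀ * (T * R) := by rw [transpose_mul, hRt, hTt]; simp only [mul_assoc]
  have hsharp : sharp A B (1/2) = Rᵀ * (T * R) := by rw [hRt, ← mul_assoc]; rfl
  rw [hsharp, hA', hB', dotProduct_transpose_mul_mulVec, dotProduct_transpose_mul_mulVec,
    dotProduct_transpose_mul_mulVec, ← mulVec_mulVec]
  exact sq_dotProduct_le _ _

end Matrix

lemma Real.log_le_half_log_add_half_log_of_sq_le_mul {s p q : ℝ} (hs : 0 < s)
    (h : s ^ 2 ≤ p * q) :
    Real.log s ≤ 1/2 * Real.log p + 1/2 * Real.log q := by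
  have hpq : p * q ≠ 0 := (lt_of_lt_of_le (pow_pos hs 2) h).ne'
  have hlog := Real.log_le_log (pow_pos hs 2) h
  rw [Real.log_pow, Real.log_mul (left_ne_zero_of_mul hpq) (right_ne_zero_of_mul hpq)] at hlog
  push_cast at hlog
  linarith

theorem log_quad_midpoint_general {d n : ℕ} (y : Fin n → (Fin d → ℝ))
    (A B : Matrix (Fin d) (Fin d) ℝ) (hA : A.PosDef) (hB : B.PosDef) :
    (∑ i, y i ⬝ᵥ (sharp A B (1/2)) *ᵥ y i) ^ 2 ≤
        (∑ i, y i ⬝ᵥ A *ᵥ y i) * (∑ i, y i ⬝ᵥ B *ᵥ y i) ∧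
      Real.log (∑ i, y i ⬝ᵥ (sharp A B (1/2)) *ᵥ y i) ≤
        (1/2) * Real.log (∑ i, y i ⬝ᵥ A *ᵥ y i) +
          (1/2) * Real.log (∑ i, y i ⬝ᵥ B *ᵥ y i) := by
  have hCS : (∑ i, y i ⬝ᵥ (sharp A B (1/2)) *ᵥ y i) ^ 2 ≤
      (∑ i, y i ⬝ᵥ A *ᵥ y i) * (∑ i, y i ⬝ᵥ B *ᵥ y i) :=
    Finset.sum_sq_le_sum_mul_sum_of_sq_le_mul _
      (fun i _ => by simpa using hA.posSemidef.dotProduct_mulVec_nonneg (y i))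
      (fun i _ => by simpa using hB.posSemidef.dotProduct_mulVec_nonneg (y i))
      (fun i _ => sq_dotProduct_sharp_half_mulVec_le hA hB (y i))
  refine ⟨hCS, ?_⟩
  by_cases hy : ∃ i, y i ≠ 0
  · exact Real.log_le_half_log_add_half_log_of_sq_le_mul
      (sum_dotProduct_mulVec_pos (hA.sharp hB _) hy) hCS
  · push Not at hy
    simp [hy]

/-- Geodesic midpoint convexity of `X ↦ log (Σᵢ yᵢᵀ X yᵢ)`: Cauchy–Schwarz form and
the equivalent midpoint inequality. -/
theorem log_quad_midpoint {d n : ℕ} (y : Fin n → (Fin d → ℝ)) (hy : ∀ i, y i ≠ 0)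
    (A B : Matrix (Fin d) (Fin d) ℝ) (hA : A.PosDef) (hB : B.PosDef) :
    (∑ i, y i ⬝ᵥ (sharp A B (1/2)) *ᵥ y i) ^ 2 ≤
        (∑ i, y i ⬝ᵥ A *ᵥ y i) * (∑ i, y i ⬝ᵥ B *ᵥ y i) ∧
      Real.log (∑ i, y i ⬝ᵥ (sharp A B (1/2)) *ᵥ y i) ≤
        (1/2) * Real.log (∑ i, y i ⬝ᵥ A *ᵥ y i) +
          (1/2) * Real.log (∑ i, y i ⬝ᵥ B *ᵥ y i) :=
  log_quad_midpoint_general y A B hA hB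
end

section
/- The elementwise 1-norm ‖X‖₁ = Σ_{i,j} |X_{ij}| is convex on ℙ_d with respect to the Euclidean structure, but it is not geodesically convex with respect to the affine-invariant metric: there exist Σ₁, Σ₂ ∈ ℙ₃ such that ‖Σ₁♯Σ₂‖₁ > ½‖Σ₁‖₁ + ½‖Σ₂‖₁. An explicit counterexample is Σ₁ = I₃ and Σ₂ = [[1.0, 0.5, −0.6],[0.5, 1.2, 0.4],[−0.6, 0.4, 1.0]], for which ‖Σ₂^{1/2}‖₁ > 4.6 = ½‖Σ₁‖₁ + ½‖Σ₂‖₁. -/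
/-!
Euclidean convexity holds because the positive definite matrices form a convex cone and
`X ↦ ∑ |Xᵢⱼ|` is a sum of absolute values of linear functionals.

For the counterexample, `I ♯ Σ₂ = Σ₂^{1/2}`. Sign changes of the characteristic polynomial
locate the eigenvalues of `Σ₂` in three short intervals, on which a rounded quadratic interpolant
`q` of `√` satisfies `|√λ - q λ| ≤ 1/100`. Hence `q(Σ₂) - 1/100 ≤ Σ₂^{1/2} ≤ q(Σ₂) + 1/100` in the
Loewner order, and testing these bounds against three vectors and the trace pins down the entries
of `Σ₂^{1/2}` well enough to show `‖Σ₂^{1/2}‖₁ > 4.6` (its actual value is about `4.76`).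
-/

open Matrix Set

open Polynomial
open scoped MatrixOrder

theorem convexOn_finset_sum {𝕜 E β ι : Type*} [Semiring 𝕜] [PartialOrder 𝕜]
    [AddCommMonoid E] [AddCommMonoid β] [PartialOrder β] [IsOrderedAddMonoid β]
    [SMul 𝕜 E] [Module 𝕜 β] [PosSMulMono 𝕜 β] {s : Set E} (hs : Convex 𝕜 s)
    (t : Finset ι) {f : ι → E → β} (hf : ∀ i ∈ t, ConvexOn 𝕜 s (f i)) :
    ConvexOn 𝕜 s fun x => ∑ i ∈ t, f i x := by
  classical
  induction t using Finset.induction_on with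
  | empty => simpa using convexOn_const 0 hs
  | insert i t hi ih =>
    simp_rw [Finset.sum_insert hi]
    exact (hf i (t.mem_insert_self i)).add (ih fun j hj => hf j (Finset.mem_insert_of_mem hj))

theorem convexOn_sum_abs_entries {m n : Type*} [Fintype m] [Fintype n] :
    ConvexOn ℝ univ fun X : Matrix m n ℝ => ∑ i, ∑ j, |X i j| :=
  convexOn_finset_sum convex_univ _ fun i _ => convexOn_finset_sum convex_univ _ fun j _ =>
    (convexOn_norm convex_univ).comp_linearMap (entryLinearMap ℝ ℝ i j)

theorem convex_setOf_posDef {n : Type*} [Fintype n] :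
    Convex ℝ {A : Matrix n n ℝ | A.PosDef} := by
  intro A hA B hB a b ha hb hab
  rcases ha.eq_or_lt with rfl | ha
  · obtain rfl : b = 1 := by simpa using hab
    simpa using hB
  · exact (hA.smul ha).add_posSemidef (hB.posSemidef.smul hb)

theorem mpow_one {d : ℕ} (t : ℝ) : mpow (1 : Matrix (Fin d) (Fin d) ℝ) t = 1 := by
  simp [mpow, cfc_apply_one]

theorem sharp_one_left {d : ℕ} (B : Matrix (Fin d) (Fin d) ℝ) (t : ℝ) :
    sharp 1 B t = mpow B t := by
  simp [sharp, mpow_one]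

theorem mpow_half {d : ℕ} (A : Matrix (Fin d) (Fin d) ℝ) : mpow A (1/2) = cfc Real.sqrt A := by
  rw [mpow]
  congr 1
  ext x
  rw [Real.sqrt_eq_rpow]

section LoewnerOrder

variable {n : Type*} [Fintype n]

theorem Matrix.dotProduct_mulVec_mono {A B : Matrix n n ℝ} (h : A ≤ B) (v : n → ℝ) :
    v ⬝ᵥ A *ᵥ v ≤ v ⬝ᵥ B *ᵥ v := by
  have := (le_iff.mp h).dotProduct_mulVec_nonneg v
  simp only [star_trivial, sub_mulVec, dotProduct_sub] at this
  linarith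

theorem Matrix.trace_mono {A B : Matrix n n ℝ} (h : A ≤ B) : A.trace ≤ B.trace := by
  have := (le_iff.mp h).trace_nonneg
  rw [trace_sub] at this
  linarith

end LoewnerOrder

theorem abs_sqrt_sub_le_of_mem_Icc {q : ℝ → ℝ} {a b ε x : ℝ} (hq : MonotoneOn q (Icc a b))
    (hx : x ∈ Icc a b) (hb : q b - ε ≤ √a) (ha : √b ≤ q a + ε) : |√x - q x| ≤ ε := by
  have hab : a ≤ b := hx.1.trans hx.2
  have hqa : q a ≤ q x := hq ⟨le_rfl, hab⟩ hx hx.1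
  have hqb : q x ≤ q b := hq hx ⟨hab, le_rfl⟩ hx.2
  have hsa : √a ≤ √x := Real.sqrt_le_sqrt hx.1
  have hsb : √x ≤ √b := Real.sqrt_le_sqrt hx.2
  rw [abs_le]
  constructor <;> linarith

theorem cfc_mem_Icc_aeval_of_abs_sub_le {n : Type*} [Fintype n] [DecidableEq n]
    {A : Matrix n n ℝ} (hA : A.IsHermitian) {f : ℝ → ℝ} {q : ℝ[X]} {ε : ℝ}
    (h : ∀ x ∈ spectrum ℝ A, |f x - q.eval x| ≤ ε) :
    cfc f A ∈ Icc (aeval A (q - C ε)) (aeval A (q + C ε)) := by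
  have hA' : IsSelfAdjoint A := hA
  have hf := (finite_spectrum A).continuousOn f
  rw [← cfc_polynomial (q - C ε) A, ← cfc_polynomial (q + C ε) A]
  constructor <;> refine cfc_mono fun x hx => ?_ <;> simp only [eval_sub, eval_add, eval_C] <;>
    linarith [abs_le.mp (h x hx)]

abbrev S₂ : Matrix (Fin 3) (Fin 3) ℝ := !![1, 0.5, -0.6; 0.5, 1.2, 0.4; -0.6, 0.4, 1]

theorem isHermitian_S₂ : S₂.IsHermitian := by
  ext i j
  fin_cases i <;> fin_cases j <;> simp

theorem eval_charpoly_S₂ (x : ℝ) :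
    S₂.charpoly.eval x = x ^ 3 - 16/5 * x ^ 2 + 263/100 * x - 59/500 := by
  rw [eval_charpoly, det_fin_three]
  simp only [Matrix.sub_apply, scalar_apply, diagonal_apply, of_apply, cons_val, Fin.reduceEq,
    ↓reduceIte]
  norm_num
  ring

theorem spectrum_S₂_subset :
    spectrum ℝ S₂ ⊆ Icc (47/1000) (49/1000) ∪ Icc (3/2) (38/25) ∪ Icc (163/100) (33/20) := by
  intro x hx
  have h := eval_charpoly_S₂ x ▸ (mem_spectrum_iff_isRoot_charpoly.mp hx).eq_zero
  simp only [mem_union, mem_Icc]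
  by_contra! hout
  rcases lt_or_ge x (47/1000) with h1 | h1
  · nlinarith [mul_pos (sub_pos.2 h1) (sub_pos.2 h1)]
  rcases lt_or_ge x (3/2) with h2 | h2
  · nlinarith [mul_pos (sub_pos.2 (hout.1.1 h1)) (sub_pos.2 h2)]
  rcases lt_or_ge x (163/100) with h3 | h3
  · nlinarith [mul_pos (sub_pos.2 (hout.1.2 h2)) (sub_pos.2 h3)]
  · have h4 := sub_pos.2 (hout.2 h3)
    nlinarith [mul_pos (mul_pos h4 h4) h4]

theorem posDef_S₂ : S₂.PosDef := by
  refine isStrictlyPositive_iff_posDef.mp <|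
    (StarOrderedRing.isStrictlyPositive_iff_spectrum_pos (R := ℝ) S₂ isHermitian_S₂).mpr
      fun x hx => ?_
  rcases spectrum_S₂_subset hx with (h | h) | h <;> linarith [h.1]

-- Rounded interpolant of `√` at the eigenvalues `≈ 0.0476, 1.5096, 1.6428` of `S₂`.
noncomputable def sqrtApprox : ℝ[X] := C (43/250) + C (977/1000) * X - C (459/2500) * X ^ 2

theorem eval_sqrtApprox (x : ℝ) :
    sqrtApprox.eval x = 43/250 + 977/1000 * x - 459/2500 * x ^ 2 := by
  simp [sqrtApprox]

theorem monotoneOn_eval_sqrtApprox : MonotoneOn sqrtApprox.eval (Icc 0 2) := by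
  intro x hx y hy hxy
  simp only [eval_sqrtApprox]
  nlinarith [hx.1, hy.2]

theorem abs_sqrt_sub_sqrtApprox_le {x : ℝ} (hx : x ∈ spectrum ℝ S₂) :
    |√x - sqrtApprox.eval x| ≤ 1/100 := by
  have hmono (a b : ℝ) (ha : 0 ≤ a) (hb : b ≤ 2) := monotoneOn_eval_sqrtApprox.mono
    (Icc_subset_Icc ha hb : Icc a b ⊆ Icc 0 2)
  rcases spectrum_S₂_subset hx with (h | h) | h <;>
    refine abs_sqrt_sub_le_of_mem_Icc (hmono _ _ (by norm_num) (by norm_num)) h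
      ((Real.le_sqrt (by norm_num [eval_sqrtApprox]) (by norm_num)).2 ?_)
      ((Real.sqrt_le_left (by norm_num [eval_sqrtApprox])).2 ?_) <;>
    norm_num [eval_sqrtApprox]

theorem aeval_sqrtApprox_S₂ : aeval S₂ sqrtApprox =
    !![213351/250000, 82651/250000, -2013/5000;
      82651/250000, 50237/50000, 35539/125000;
      -2013/5000, 35539/125000, 108741/125000] := by
  ext i j
  fin_cases i <;> fin_cases j <;>
    norm_num [sqrtApprox, sq, mul_apply, Fin.sum_univ_three, algebraMap_matrix_apply]

-- The left side is `∑ sᵢⱼ Bᵢⱼ` with `s = [[1, 1, -1], [1, 1, 1], [-1, 1, 1]]`, the sign pattern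
-- of `√S₂`.
theorem quadForms_sub_trace_le_sum_abs (B : Matrix (Fin 3) (Fin 3) ℝ) :
    ![1, 1, 0] ⬝ᵥ B *ᵥ ![1, 1, 0] + ![0, 1, 1] ⬝ᵥ B *ᵥ ![0, 1, 1] +
      ![1, 0, -1] ⬝ᵥ B *ᵥ ![1, 0, -1] - B.trace ≤ ∑ i, ∑ j, |B i j| := by
  simp only [dotProduct, mulVec, trace, diag_apply, Fin.sum_univ_three, cons_val]
  linarith [le_abs_self (B 0 0), le_abs_self (B 1 1), le_abs_self (B 2 2),
    le_abs_self (B 0 1), le_abs_self (B 1 0), le_abs_self (B 1 2), le_abs_self (B 2 1),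
    neg_le_abs (B 0 2), neg_le_abs (B 2 0)]

theorem sum_abs_entries_cfc_sqrt_S₂ : 23/5 < ∑ i, ∑ j, |cfc Real.sqrt S₂ i j| := by
  obtain ⟨hL, hU⟩ :=
    cfc_mem_Icc_aeval_of_abs_sub_le isHermitian_S₂ fun _ hx => abs_sqrt_sub_sqrtApprox_le hx
  simp only [map_sub, map_add, aeval_C, aeval_sqrtApprox_S₂, Algebra.algebraMap_eq_smul_one]
    at hL hU
  have h1 := dotProduct_mulVec_mono hL ![1, 1, 0]
  have h2 := dotProduct_mulVec_mono hL ![0, 1, 1]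
  have h3 := dotProduct_mulVec_mono hL ![1, 0, -1]
  have h_trace := trace_mono hU
  refine lt_of_lt_of_le ?_ (quadForms_sub_trace_le_sum_abs _)
  simp [dotProduct, mulVec, trace, Fin.sum_univ_three] at h1 h2 h3 h_trace ⊢
  norm_num at h1 h2 h3 h_trace
  linarith

/-- The elementwise 1-norm is Euclidean convex on `ℙ_d`, but not geodesically convex
w.r.t. the affine-invariant metric: for `Σ₁ = I₃` and the explicit `Σ₂` below,
`‖Σ₁ ♯ Σ₂‖₁ > ½‖Σ₁‖₁ + ½‖Σ₂‖₁` (note `½‖I₃‖₁ + ½‖Σ₂‖₁ = 4.6`). -/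
theorem entrywise_one_norm {d : ℕ} :
    ConvexOn ℝ {X : Matrix (Fin d) (Fin d) ℝ | X.PosDef}
      (fun X : Matrix (Fin d) (Fin d) ℝ => ∑ i, ∑ j, |X i j|) ∧
    ((!![1, 0.5, -0.6; 0.5, 1.2, 0.4; -0.6, 0.4, 1] : Matrix (Fin 3) (Fin 3) ℝ).PosDef ∧
      (∑ i, ∑ j,
          |sharp (1 : Matrix (Fin 3) (Fin 3) ℝ)
            (!![1, 0.5, -0.6; 0.5, 1.2, 0.4; -0.6, 0.4, 1]) (1/2) i j|) >
        (1/2) * (∑ i, ∑ j, |(1 : Matrix (Fin 3) (Fin 3) ℝ) i j|) +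
          (1/2) * (∑ i, ∑ j,
            |(!![1, 0.5, -0.6; 0.5, 1.2, 0.4; -0.6, 0.4, 1] : Matrix (Fin 3) (Fin 3) ℝ) i j|)) := by
  refine ⟨convexOn_sum_abs_entries.subset (subset_univ _) convex_setOf_posDef, posDef_S₂, ?_⟩
  change (1/2) * ∑ i, ∑ j, |(1 : Matrix (Fin 3) (Fin 3) ℝ) i j| +
    (1/2) * ∑ i, ∑ j, |S₂ i j| < ∑ i, ∑ j, |sharp 1 S₂ (1/2) i j|
  have h_one : ∑ i, ∑ j, |(1 : Matrix (Fin 3) (Fin 3) ℝ) i j| = 3 := by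
    simp [Fin.sum_univ_three, one_apply]
    norm_num
  have h_S₂ : ∑ i, ∑ j, |S₂ i j| = 31/5 := by
    simp [Fin.sum_univ_three]
    norm_num [abs_of_pos]
  rw [sharp_one_left, mpow_half, h_one, h_S₂]
  linarith [sum_abs_entries_cfc_sqrt_S₂]
end
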